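/- Let G be a directed mixed graph over micro-variables X whose joint distribution P_X has positive density, and suppose the pair (G, P_X) is σ-Markovian and σ-faithful. Let P be a partition of X with coarse graph co(G,P) and let S ⊆ P. Then two variable groups Y, Z ∈ P ∖ S are mutually conditionally independent given T = ∪_{W∈S} W if and only if they are pairwise conditionally independent given T. -/

import Mathlib

/-! ## Mixed graphs -/

/-- A mixed graph: directed, bidirected and undirected edges, no self-edges. -/
structure MixedGraph (V : Type) where
  dir : V → V → Prop
  bidir : V → V → Prop
  undir : V → V → Prop
  bidir_symm : ∀ {a b}, bidir a b → bidir b a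
  undir_symm : ∀ {a b}, undir a b → undir b a
  dir_irrefl : ∀ a, ¬ dir a a
  bidir_irrefl : ∀ a, ¬ bidir a a
  undir_irrefl : ∀ a, ¬ undir a a

namespace MixedGraph

variable {V I : Type}

/-- A directed mixed graph is a mixed graph without undirected edges. -/
def IsDMG (G : MixedGraph V) : Prop := ∀ a b, ¬ G.undir a b

/-- `a` and `b` lie in the same strongly connected component: there are directed
paths between them in both directions. -/
def Strongly (G : MixedGraph V) (a b : V) : Prop :=
  Relation.ReflTransGen G.dir a b ∧ Relation.ReflTransGen G.dir b a

lemma Strongly.refl (G : MixedGraph V) (a : V) : G.Strongly a a :=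
  ⟨Relation.ReflTransGen.refl, Relation.ReflTransGen.refl⟩

lemma Strongly.symm {G : MixedGraph V} {a b : V} (h : G.Strongly a b) : G.Strongly b a :=
  ⟨h.2, h.1⟩

/-- A graph is acyclic if it has no nontrivial directed closed walk. -/
def Acyclic (G : MixedGraph V) : Prop := ∀ a, ¬ Relation.TransGen G.dir a a

end MixedGraph

/-! ## Walks -/

/-- The four ways in which an edge can occur on a walk, as traversed from its
first node `a` to its second node `b`: `fw` is `a → b`, `bw` is `a ← b`,
`bi` is `a ↔ b` and `un` is `a − b`. -/
inductive StepKind | fw | bw | bi | un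
deriving DecidableEq

/-- A step of a walk: an ordered pair of nodes together with the kind of edge. -/
structure Step (V : Type) where
  a : V
  b : V
  k : StepKind

/-- The step is an actual edge of the graph `G`. -/
def Step.ok {V : Type} (G : MixedGraph V) (s : Step V) : Prop :=
  match s.k with
  | .fw => G.dir s.a s.b
  | .bw => G.dir s.b s.a
  | .bi => G.bidir s.a s.b
  | .un => G.undir s.a s.b

/-- The edge of the step has an arrowhead at its first node. -/
def Step.headA {V : Type} (s : Step V) : Prop := s.k = .bw ∨ s.k = .bi

/-- The edge of the step has an arrowhead at its second node. -/
def Step.headB {V : Type} (s : Step V) : Prop := s.k = .fw ∨ s.k = .bi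

namespace MixedGraph

variable {V I : Type}

/-- `IsWalk G x y L`: the list of steps `L` forms a walk from `x` to `y` in `G`. -/
inductive IsWalk (G : MixedGraph V) : V → V → List (Step V) → Prop
  | nil (a : V) : IsWalk G a a []
  | cons {c : V} (s : Step V) (L : List (Step V)) (hok : s.ok G)
      (hw : IsWalk G s.b c L) : IsWalk G s.a c (s :: L)

/-- `v` is a collider at junction `i` of the walk `L`: both edges adjacent to the
inner node `v` point into `v`. -/
def ColliderAt (L : List (Step V)) (i : ℕ) (v : V) : Prop :=
  ∃ s t, L[i]? = some s ∧ L[i+1]? = some t ∧ s.b = v ∧ t.a = v ∧ s.headB ∧ t.headA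

/-- `v` is a non-collider at junction `i` of the walk `L`. -/
def NonColliderAt (L : List (Step V)) (i : ℕ) (v : V) : Prop :=
  ∃ s t, L[i]? = some s ∧ L[i+1]? = some t ∧ s.b = v ∧ t.a = v ∧ ¬ (s.headB ∧ t.headA)

/-- The walk `L` from `x` to `y` is m-blocked by the node set `S`. -/
def MBlockedWalk (G : MixedGraph V) (S : Set V) (x y : V) (L : List (Step V)) : Prop :=
  x ∈ S ∨ y ∈ S ∨
  (∃ i v, ColliderAt L i v ∧ ∀ d, Relation.ReflTransGen G.dir v d → d ∉ S) ∨
  (∃ i v, NonColliderAt L i v ∧ v ∈ S)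

/-- The walk `L` from `x` to `y` is σ-blocked by the node set `S`. -/
def SigmaBlockedWalk (G : MixedGraph V) (S : Set V) (x y : V) (L : List (Step V)) : Prop :=
  x ∈ S ∨ y ∈ S ∨
  (∃ i v, ColliderAt L i v ∧ ∀ d, Relation.ReflTransGen G.dir v d → d ∉ S) ∨
  (∃ i s t, L[i]? = some s ∧ L[i+1]? = some t ∧ s.b = t.a ∧ ¬ (s.headB ∧ t.headA) ∧
    s.b ∈ S ∧
    (((s.k = .bw ∨ s.k = .un) ∧ ¬ G.Strongly s.b s.a) ∨
     ((t.k = .fw ∨ t.k = .un) ∧ ¬ G.Strongly t.a t.b)))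

/-- `x` and `y` are m-separated by `S` in `G`. -/
def MSep (G : MixedGraph V) (S : Set V) (x y : V) : Prop :=
  ∀ L, G.IsWalk x y L → G.MBlockedWalk S x y L

/-- `x` and `y` are σ-separated by `S` in `G`. -/
def SigmaSep (G : MixedGraph V) (S : Set V) (x y : V) : Prop :=
  ∀ L, G.IsWalk x y L → G.SigmaBlockedWalk S x y L

/-! ## Acyclification -/

/-- The acyclification of a mixed graph. -/
def acy (G : MixedGraph V) : MixedGraph V where
  dir a b := (∃ c, G.dir a c ∧ G.Strongly c b) ∧ ¬ G.Strongly a b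
  bidir a b := a ≠ b ∧ (G.Strongly a b ∨
    ∃ a' b', G.Strongly a a' ∧ G.Strongly b b' ∧ G.bidir a' b')
  undir a b := ¬ G.Strongly a b ∧ G.undir a b
  bidir_symm := by
    rintro a b ⟨hab, h | ⟨a', b', ha, hb, h⟩⟩
    · exact ⟨hab.symm, Or.inl h.symm⟩
    · exact ⟨hab.symm, Or.inr ⟨b', a', hb, ha, G.bidir_symm h⟩⟩
  undir_symm := by
    rintro a b ⟨h1, h2⟩
    exact ⟨fun h => h1 h.symm, G.undir_symm h2⟩
  dir_irrefl := fun a h => h.2 (Strongly.refl G a)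
  bidir_irrefl := fun a h => h.1 rfl
  undir_irrefl := fun a h => h.1 (Strongly.refl G a)

/-! ## Coarse graphs -/

/-- The coarse (quotient) graph of `G` with respect to the partition given by the
quotient map `q` onto the set of groups `I`. -/
def coarse (G : MixedGraph V) (q : V → I) : MixedGraph I where
  dir Y Z := Y ≠ Z ∧ ∃ y z, q y = Y ∧ q z = Z ∧ G.dir y z
  bidir Y Z := Y ≠ Z ∧ ∃ y z, q y = Y ∧ q z = Z ∧ G.bidir y z
  undir Y Z := Y ≠ Z ∧ ∃ y z, q y = Y ∧ q z = Z ∧ G.undir y z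
  bidir_symm := by
    rintro Y Z ⟨hne, y, z, hy, hz, h⟩
    exact ⟨hne.symm, z, y, hz, hy, G.bidir_symm h⟩
  undir_symm := by
    rintro Y Z ⟨hne, y, z, hy, hz, h⟩
    exact ⟨hne.symm, z, y, hz, hy, G.undir_symm h⟩
  dir_irrefl := fun Y h => h.1 rfl
  bidir_irrefl := fun Y h => h.1 rfl
  undir_irrefl := fun Y h => h.1 rfl

end MixedGraph

open MeasureTheory ProbabilityTheory

/-- The σ-algebra generated by the group `A` of the random variables `X v`. -/
def genOf {Ω V : Type} [MeasurableSpace Ω] (X : V → Ω → ℝ) (A : Set V) :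
    MeasurableSpace Ω :=
  ⨆ v ∈ A, MeasurableSpace.comap (X v) inferInstance

/-- Mutual conditional independence of the groups `Y` and `Z` of random variables
given the group `W`. -/
def GroupCI {Ω V : Type} [m : MeasurableSpace Ω] [StandardBorelSpace Ω]
    (μ : Measure Ω) [IsFiniteMeasure μ] (X : V → Ω → ℝ) (Y Z W : Set V) : Prop :=
  ∃ h : genOf X W ≤ m, ProbabilityTheory.CondIndep (genOf X W) (genOf X Y) (genOf X Z) h μ

/-- The joint distribution of the variables `X v` has a positive density. -/
def HasPositiveDensity {Ω V : Type} [MeasurableSpace Ω] [Fintype V] (μ : Measure Ω)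
    (X : V → Ω → ℝ) : Prop :=
  ∃ f : (V → ℝ) → ℝ, Measurable f ∧ (∀ x, 0 < f x) ∧
    Measure.map (fun ω v => X v ω) μ = volume.withDensity fun x => ENNReal.ofReal (f x)

open MeasureTheory ProbabilityTheory MixedGraph

variable {Ω V I : Type}

/-- `(G, μ)` is σ-Markovian: σ-separation implies conditional independence. -/
def SigmaMarkov [m : MeasurableSpace Ω] [StandardBorelSpace Ω] (G : MixedGraph V)
    (μ : Measure Ω) [IsFiniteMeasure μ] (X : V → Ω → ℝ) : Prop :=
  ∀ (a b : V) (S : Set V), G.SigmaSep S a b → GroupCI μ X {a} {b} S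

/-- `(G, μ)` is σ-faithful: conditional independence implies σ-separation. -/
def SigmaFaithful [m : MeasurableSpace Ω] [StandardBorelSpace Ω] (G : MixedGraph V)
    (μ : Measure Ω) [IsFiniteMeasure μ] (X : V → Ω → ℝ) : Prop :=
  ∀ (a b : V) (S : Set V), GroupCI μ X {a} {b} S → G.SigmaSep S a b

/-- `(G, μ)` is m-Markovian: m-separation implies conditional independence. -/
def MMarkov [m : MeasurableSpace Ω] [StandardBorelSpace Ω] (G : MixedGraph V)
    (μ : Measure Ω) [IsFiniteMeasure μ] (X : V → Ω → ℝ) : Prop :=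
  ∀ (a b : V) (S : Set V), G.MSep S a b → GroupCI μ X {a} {b} S

/-- The pair of the coarse graph `G.coarse q` and the distribution is σ-faithful on
the group level: mutual conditional independence of two groups given the union of
the groups in `S` implies their σ-separation by `S` in the coarse graph. -/
def SigmaFaithfulGrp [m : MeasurableSpace Ω] [StandardBorelSpace Ω] (G : MixedGraph V)
    (q : V → I) (μ : Measure Ω) [IsFiniteMeasure μ] (X : V → Ω → ℝ) : Prop :=
  ∀ (Y Z : I) (S : Set I),
    GroupCI μ X (q ⁻¹' {Y}) (q ⁻¹' {Z}) (q ⁻¹' S) → (G.coarse q).SigmaSep S Y Z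

/-!
By σ-faithfulness, pairwise conditional independence of the groups `Y` and `Z` given `T` makes
every `y ∈ Y` σ-separated from every `z ∈ Z` by `T`. This separation survives enlarging `T` by
nodes `U ⊆ Y ∪ Z`: a walk from `y` to `z` that is open given `T ∪ U` can be cut at its first
collider without descendants in `T` and continued along a directed path to a descendant in `U`,
which yields a walk from `y` into `Z` (or, symmetrically, from `z` into `Y`) that is open given `T`.
By σ-Markovianity, `y ⊥ z | T ∪ U` for all such `U`, and the contraction property of conditional
independence assembles these statements, one variable at a time, into `Y ⊥ Z | T`.
-/

namespace MixedGraph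

variable {G : MixedGraph V}

lemma IsWalk.append {x y z : V} {L₁ L₂ : List (Step V)} (h₁ : G.IsWalk x y L₁)
    (h₂ : G.IsWalk y z L₂) : G.IsWalk x z (L₁ ++ L₂) := by
  induction h₁ with
  | nil => exact h₂
  | cons s L hok _ ih => exact .cons s _ hok (ih h₂)

lemma IsWalk.take_succ {x y : V} {L : List (Step V)} (h : G.IsWalk x y L) {i : ℕ}
    {s : Step V} (hs : L[i]? = some s) : G.IsWalk x s.b (L.take (i + 1)) := by
  induction h generalizing i with
  | nil => simp at hs
  | cons u L hok _ ih =>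
    cases i with
    | zero =>
      obtain rfl : u = s := by simpa using hs
      exact .cons u _ hok (.nil u.b)
    | succ i => exact .cons u _ hok (ih (by simpa using hs))

lemma exists_forward_isWalk {v d : V} (h : Relation.ReflTransGen G.dir v d) :
    ∃ P, G.IsWalk v d P ∧ ∀ t ∈ P, t.k = .fw ∧ Relation.ReflTransGen G.dir v t.a := by
  induction h using Relation.ReflTransGen.head_induction_on with
  | refl => exact ⟨[], .nil d, by simp⟩
  | @head v w hvw _ ih =>
    obtain ⟨P, hP, hPfw⟩ := ih
    refine ⟨⟨v, w, .fw⟩ :: P, .cons ⟨v, w, .fw⟩ _ hvw hP, ?_⟩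
    intro t ht
    rcases List.mem_cons.mp ht with rfl | ht
    · exact ⟨rfl, .refl⟩
    · exact ⟨(hPfw t ht).1, .head hvw (hPfw t ht).2⟩

lemma SigmaBlockedWalk.union_of_forall_collider_ancestor {C D : Set V} {x y : V} {L : List (Step V)}
    (h : G.SigmaBlockedWalk C x y L)
    (hcol : ∀ i v, ColliderAt L i v → ∃ d, Relation.ReflTransGen G.dir v d ∧ d ∈ C) :
    G.SigmaBlockedWalk (C ∪ D) x y L := by
  rcases h with hx | hy | ⟨i, v, hv, hnoC⟩ | ⟨i, s, t, hs, ht, hst, hnc, hsC, hdir⟩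
  · exact .inl (.inl hx)
  · exact .inr (.inl (.inl hy))
  · obtain ⟨d, hvd, hdC⟩ := hcol i v hv
    exact absurd hdC (hnoC d hvd)
  · exact .inr (.inr (.inr ⟨i, s, t, hs, ht, hst, hnc, .inl hsC, hdir⟩))

lemma not_sigmaBlockedWalk_take_append {C D : Set V} {a b v d : V} {L P : List (Step V)}
    (hopen : ¬ G.SigmaBlockedWalk (C ∪ D) a b L) {i₀ : ℕ} (hi₀ : i₀ < L.length)
    (hmin : ∀ i < i₀, ∀ w, ColliderAt L i w → ∃ d, Relation.ReflTransGen G.dir w d ∧ d ∈ C)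
    (hnoC : ∀ d, Relation.ReflTransGen G.dir v d → d ∉ C) (hvd : Relation.ReflTransGen G.dir v d)
    (hP : ∀ t ∈ P, t.k = .fw ∧ Relation.ReflTransGen G.dir v t.a) :
    ¬ G.SigmaBlockedWalk C a d (L.take (i₀ + 1) ++ P) := by
  have hlen : (L.take (i₀ + 1)).length = i₀ + 1 := by
    simp only [List.length_take]; omega
  have hpre : ∀ j ≤ i₀, (L.take (i₀ + 1) ++ P)[j]? = L[j]? := fun j hj => by
    rw [List.getElem?_append_left (by omega), List.getElem?_take_of_lt (by omega)]
  have hsuf : ∀ j t, i₀ < j → (L.take (i₀ + 1) ++ P)[j]? = some t → t ∈ P := fun j t hj ht => by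
    rw [List.getElem?_append_right (by omega)] at ht
    exact List.mem_of_getElem? ht
  rintro (haC | hdC | ⟨i, w, ⟨s, t, hs, ht, hsw, htw, hsh, hth⟩, hnod⟩ |
    ⟨i, s, t, hs, ht, hst, hnc, hsC, hdir⟩)
  · exact hopen (.inl (.inl haC))
  · exact hnoC d hvd hdC
  · by_cases hi : i < i₀
    · rw [hpre i hi.le] at hs
      rw [hpre (i + 1) hi] at ht
      obtain ⟨d', hwd', hd'C⟩ := hmin i hi w ⟨s, t, hs, ht, hsw, htw, hsh, hth⟩
      exact hnod d' hwd' hd'C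
    · have htfw := (hP t (hsuf (i + 1) t (by omega) ht)).1
      simp [Step.headA, htfw] at hth
  · by_cases hi : i < i₀
    · rw [hpre i hi.le] at hs
      rw [hpre (i + 1) hi] at ht
      exact hopen (.inr (.inr (.inr ⟨i, s, t, hs, ht, hst, hnc, .inl hsC, hdir⟩)))
    · exact hnoC t.a (hP t (hsuf (i + 1) t (by omega) ht)).2 (hst ▸ hsC)

lemma sigmaSep_union_of_subset_right {A B C D : Set V} (hD : D ⊆ B)
    (h : ∀ a ∈ A, ∀ b ∈ B, G.SigmaSep C a b) : ∀ a ∈ A, ∀ b ∈ B, G.SigmaSep (C ∪ D) a b := by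
  classical
  intro a ha b hb L hL
  by_contra hopen
  by_cases hcol : ∃ i v, ColliderAt L i v ∧ ∀ d, Relation.ReflTransGen G.dir v d → d ∉ C
  · obtain ⟨v, ⟨s₀, t₀, hs₀, ht₀, hv, htv, hsh, hth⟩, hnoC⟩ := Nat.find_spec hcol
    have hmin : ∀ i < Nat.find hcol, ∀ w, ColliderAt L i w →
        ∃ d, Relation.ReflTransGen G.dir w d ∧ d ∈ C := fun i hi w hw => by
      by_contra hno
      exact Nat.find_min hcol hi ⟨w, hw, fun d hwd hdC => hno ⟨d, hwd, hdC⟩⟩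
    obtain ⟨d, hvd, hdCD⟩ : ∃ d, Relation.ReflTransGen G.dir v d ∧ d ∈ C ∪ D := by
      by_contra hno
      push Not at hno
      exact hopen (.inr (.inr (.inl ⟨_, v, ⟨s₀, t₀, hs₀, ht₀, hv, htv, hsh, hth⟩, hno⟩)))
    have hdD : d ∈ D := hdCD.resolve_left (hnoC d hvd)
    obtain ⟨P, hPwalk, hPfw⟩ := exists_forward_isWalk hvd
    exact not_sigmaBlockedWalk_take_append hopen
      (List.getElem?_eq_some_iff.mp hs₀).1 hmin hnoC hvd hPfw
      (h a ha d (hD hdD) _ ((hL.take_succ hs₀).append (hv ▸ hPwalk)))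
  · push Not at hcol
    exact hopen ((h a ha b hb L hL).union_of_forall_collider_ancestor hcol)

end MixedGraph

namespace MeasureTheory

variable {Ω : Type*} {mΩ : MeasurableSpace Ω} {μ : Measure Ω}

lemma isPiSystem_image2_inter (m₁ m₂ : MeasurableSpace Ω) :
    IsPiSystem (Set.image2 (· ∩ ·) {s | MeasurableSet[m₁] s} {t | MeasurableSet[m₂] t}) := by
  rintro _ ⟨s₁, hs₁, t₁, ht₁, rfl⟩ _ ⟨s₂, hs₂, t₂, ht₂, rfl⟩ -
  exact ⟨s₁ ∩ s₂, hs₁.inter hs₂, t₁ ∩ t₂, ht₁.inter ht₂, Set.inter_inter_inter_comm _ _ _ _⟩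

lemma generateFrom_image2_inter (m₁ m₂ : MeasurableSpace Ω) :
    MeasurableSpace.generateFrom
      (Set.image2 (· ∩ ·) {s | MeasurableSet[m₁] s} {t | MeasurableSet[m₂] t}) = m₁ ⊔ m₂ := by
  refine le_antisymm (MeasurableSpace.generateFrom_le ?_) (sup_le (fun s hs => ?_) fun t ht => ?_)
  · rintro _ ⟨s, hs, t, ht, rfl⟩
    exact (le_sup_left (b := m₂) _ hs).inter (le_sup_right (a := m₁) _ ht)
  · exact .basic _ ⟨s, hs, Set.univ, .univ, Set.inter_univ s⟩
  · exact .basic _ ⟨Set.univ, .univ, t, ht, Set.univ_inter t⟩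

lemma setIntegral_eq_of_isPiSystem {E : Type*} [NormedAddCommGroup E] [NormedSpace ℝ E]
    {m : MeasurableSpace Ω} {p : Set (Set Ω)} (hm : m ≤ mΩ)
    (hgen : m = MeasurableSpace.generateFrom p) (hp : IsPiSystem p) {f g : Ω → E}
    (hf : Integrable f μ) (hg : Integrable g μ) (huniv : ∫ x, f x ∂μ = ∫ x, g x ∂μ)
    (hbasic : ∀ s ∈ p, ∫ x in s, f x ∂μ = ∫ x in s, g x ∂μ) {s : Set Ω}
    (hs : MeasurableSet[m] s) : ∫ x in s, f x ∂μ = ∫ x in s, g x ∂μ := by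
  induction s, hs using MeasurableSpace.induction_on_inter hgen hp with
  | empty => simp
  | basic s hs => exact hbasic s hs
  | compl s hs ih =>
    rw [← integral_add_compl (hm s hs) hf, ← integral_add_compl (hm s hs) hg, ih] at huniv
    exact add_left_cancel huniv
  | iUnion s hdisj hs ih =>
    rw [integral_iUnion (fun i => hm _ (hs i)) hdisj hf.integrableOn,
      integral_iUnion (fun i => hm _ (hs i)) hdisj hg.integrableOn]
    exact tsum_congr ih

lemma ae_norm_condExp_indicator_one_le [IsFiniteMeasure μ] {m : MeasurableSpace Ω} (hm : m ≤ mΩ)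
    {s : Set Ω} (hs : MeasurableSet[mΩ] s) : ∀ᵐ x ∂μ, ‖(μ⟦s | m⟧) x‖ ≤ 1 := by
  have hnonneg : 0 ≤ᵐ[μ] μ⟦s | m⟧ :=
    condExp_nonneg (ae_of_all _ (Set.indicator_nonneg fun _ _ => zero_le_one))
  have hle : μ⟦s | m⟧ ≤ᵐ[μ] μ[fun _ => (1 : ℝ) | m] :=
    condExp_mono ((integrable_const (1 : ℝ)).indicator hs) (integrable_const (1 : ℝ))
      (ae_of_all _ (Set.indicator_le_self' fun _ _ => zero_le_one))
  rw [condExp_const hm] at hle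
  filter_upwards [hnonneg, hle] with x h0 h1
  rw [Real.norm_eq_abs, abs_le]
  exact ⟨(neg_nonpos.mpr zero_le_one).trans h0, h1⟩

end MeasureTheory

namespace ProbabilityTheory

open MeasureTheory

variable {Ω : Type*} {mΩ : MeasurableSpace Ω} [StandardBorelSpace Ω] {μ : Measure Ω}
  [IsFiniteMeasure μ] {m' m₁ m₂ m₃ : MeasurableSpace Ω} {hm' : m' ≤ mΩ}

lemma CondIndep.condExp_indicator_sup_ae_eq (hm₁ : m₁ ≤ mΩ) (hm₂ : m₂ ≤ mΩ)
    (h : CondIndep m' m₁ m₂ hm' μ) {B : Set Ω} (hB : MeasurableSet[m₂] B) :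
    μ⟦B | m' ⊔ m₁⟧ =ᵐ[μ] μ⟦B | m'⟧ := by
  have hB' := hm₂ B hB
  have hBint : Integrable (B.indicator fun _ => (1 : ℝ)) μ :=
    (integrable_const (1 : ℝ)).indicator hB'
  refine (ae_eq_condExp_of_forall_setIntegral_eq (sup_le hm' hm₁) hBint
    (fun _ _ _ => integrable_condExp.integrableOn) (fun u hu _ => ?_)
    (stronglyMeasurable_condExp.mono (le_sup_left : m' ≤ m' ⊔ m₁)).aestronglyMeasurable).symm
  refine setIntegral_eq_of_isPiSystem (sup_le hm' hm₁) (generateFrom_image2_inter m' m₁).symm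
    (isPiSystem_image2_inter m' m₁) integrable_condExp hBint (integral_condExp hm') ?_ hu
  rintro _ ⟨s, hs, t, ht, rfl⟩
  have ht' := hm₁ t ht
  have hbound := ae_norm_condExp_indicator_one_le (μ := μ) hm' hB'
  have hpull : μ[μ⟦B | m'⟧ * t.indicator fun _ => (1 : ℝ) | m'] =ᵐ[μ] μ⟦B | m'⟧ * μ⟦t | m'⟧ :=
    condExp_stronglyMeasurable_mul_of_bound hm' stronglyMeasurable_condExp
      ((integrable_const (1 : ℝ)).indicator ht') 1 hbound
  have hindep : μ⟦t ∩ B | m'⟧ =ᵐ[μ] μ⟦t | m'⟧ * μ⟦B | m'⟧ :=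
    (condIndep_iff m' m₁ m₂ hm' hm₁ hm₂ μ).mp h t B ht hB
  dsimp only
  calc ∫ x in s ∩ t, (μ⟦B | m'⟧) x ∂μ
      = ∫ x in s, (μ⟦B | m'⟧ * t.indicator fun _ => (1 : ℝ)) x ∂μ := by
        rw [← setIntegral_indicator ht']
        congr 1
        funext x
        by_cases hx : x ∈ t <;> simp [hx]
    _ = ∫ x in s, μ[μ⟦B | m'⟧ * t.indicator fun _ => (1 : ℝ) | m'] x ∂μ :=
        (setIntegral_condExp hm' (((integrable_const (1 : ℝ)).indicator ht').bdd_mul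
          integrable_condExp.aestronglyMeasurable hbound) hs).symm
    _ = ∫ x in s, (μ⟦t ∩ B | m'⟧) x ∂μ := by
        refine setIntegral_congr_ae (hm' s hs) ?_
        filter_upwards [hpull, hindep] with x h₁ h₂ _
        rw [h₁, h₂, Pi.mul_apply, Pi.mul_apply, mul_comm]
    _ = ∫ x in s, (t ∩ B).indicator (fun _ => (1 : ℝ)) x ∂μ :=
        setIntegral_condExp hm' ((integrable_const (1 : ℝ)).indicator (ht'.inter hB')) hs
    _ = ∫ x in s ∩ t, B.indicator (fun _ => (1 : ℝ)) x ∂μ := by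
        rw [← setIntegral_indicator ht', Set.indicator_indicator]

lemma CondIndep.contraction (hm₁ : m₁ ≤ mΩ) (hm₂ : m₂ ≤ mΩ) (hm₃ : m₃ ≤ mΩ)
    (h₁₃ : CondIndep m' m₁ m₃ hm' μ) (h₂₃ : CondIndep (m' ⊔ m₁) m₂ m₃ (sup_le hm' hm₁) μ) :
    CondIndep m' (m₁ ⊔ m₂) m₃ hm' μ := by
  have hn : m' ⊔ m₁ ≤ mΩ := sup_le hm' hm₁
  refine CondIndepSets.condIndep (sup_le hm₁ hm₂) hm₃ (isPiSystem_image2_inter m₁ m₂)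
    (@MeasurableSpace.isPiSystem_measurableSet Ω m₃) (generateFrom_image2_inter m₁ m₂).symm
    (@MeasurableSpace.generateFrom_measurableSet Ω m₃).symm ?_
  rw [condIndepSets_iff m' hm' _ {s | MeasurableSet[m₃] s} ?meas₁₂ (fun C hC => hm₃ C hC) μ]
  case meas₁₂ =>
    rintro _ ⟨A, hA, B, hB, rfl⟩
    exact (hm₁ A hA).inter (hm₂ B hB)
  rintro _ C ⟨A, hA, B, hB, rfl⟩ hC
  dsimp only
  have hAn : MeasurableSet[m' ⊔ m₁] A := le_sup_right (a := m') A hA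
  have hB' := hm₂ B hB
  have hC' := hm₃ C hC
  have hindicator : ∀ D : Set Ω, (A ∩ D).indicator (fun _ => (1 : ℝ)) =
      A.indicator (D.indicator fun _ => (1 : ℝ)) := fun D => (Set.indicator_indicator ..).symm
  have hfine : μ⟦A ∩ B ∩ C | m' ⊔ m₁⟧ =ᵐ[μ] μ⟦A ∩ B | m' ⊔ m₁⟧ * μ⟦C | m'⟧ := by
    rw [Set.inter_assoc, hindicator, hindicator]
    filter_upwards [condExp_indicator ((integrable_const (1 : ℝ)).indicator (hB'.inter hC')) hAn,
      condExp_indicator ((integrable_const (1 : ℝ)).indicator hB') hAn,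
      (condIndep_iff _ m₂ m₃ hn hm₂ hm₃ μ).mp h₂₃ B C hB hC,
      h₁₃.condExp_indicator_sup_ae_eq hm₁ hm₃ hC] with x h₁ h₂ h₃ h₄
    rw [h₁, Pi.mul_apply, h₂, ← h₄]
    by_cases hx : x ∈ A <;> simp [hx, h₃]
  have hint : Integrable (μ⟦A ∩ B | m' ⊔ m₁⟧ * μ⟦C | m'⟧) μ :=
    integrable_condExp.mul_bdd (c := 1) integrable_condExp.aestronglyMeasurable
      (ae_norm_condExp_indicator_one_le hm' hC')
  calc μ⟦A ∩ B ∩ C | m'⟧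
      =ᵐ[μ] μ[μ⟦A ∩ B ∩ C | m' ⊔ m₁⟧ | m'] := (condExp_condExp_of_le le_sup_left hn).symm
    _ =ᵐ[μ] μ[μ⟦A ∩ B | m' ⊔ m₁⟧ * μ⟦C | m'⟧ | m'] := condExp_congr_ae hfine
    _ =ᵐ[μ] μ[μ⟦A ∩ B | m' ⊔ m₁⟧ | m'] * μ⟦C | m'⟧ :=
      condExp_mul_of_stronglyMeasurable_right stronglyMeasurable_condExp hint integrable_condExp
    _ =ᵐ[μ] μ⟦A ∩ B | m'⟧ * μ⟦C | m'⟧ :=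
      (condExp_condExp_of_le le_sup_left hn).mul_right

end ProbabilityTheory

section GenOf

variable [mΩ : MeasurableSpace Ω] {X : V → Ω → ℝ} {A B : Set V}

lemma genOf_le (hX : ∀ v, Measurable (X v)) (A : Set V) : genOf X A ≤ mΩ :=
  iSup₂_le fun v _ => (hX v).comap_le

lemma genOf_mono (h : A ⊆ B) : genOf X A ≤ genOf X B :=
  biSup_mono h

lemma genOf_union (A B : Set V) : genOf X (A ∪ B) = genOf X A ⊔ genOf X B :=
  iSup_union

end GenOf

section GroupCI

variable [mΩ : MeasurableSpace Ω] [StandardBorelSpace Ω] {μ : Measure Ω} [IsFiniteMeasure μ]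
  {X : V → Ω → ℝ} {A A' B W : Set V}

lemma GroupCI.symm (h : GroupCI μ X A B W) : GroupCI μ X B A W :=
  ⟨h.1, h.2.symm⟩

lemma GroupCI.mono (h : GroupCI μ X A B W) (hA : A' ⊆ A) (hB : B' ⊆ B) :
    GroupCI μ X A' B' W :=
  ⟨h.1, condIndep_of_condIndep_of_le_right
    (condIndep_of_condIndep_of_le_left h.2 (genOf_mono hA)) (genOf_mono hB)⟩

lemma groupCI_empty_left (hX : ∀ v, Measurable (X v)) (B W : Set V) : GroupCI μ X ∅ B W := by
  refine ⟨genOf_le hX W, ?_⟩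
  simpa [genOf] using condIndep_bot_left (genOf X B)

lemma GroupCI.contraction (hX : ∀ v, Measurable (X v)) (h₁ : GroupCI μ X A B W)
    (h₂ : GroupCI μ X A' B (W ∪ A)) : GroupCI μ X (A ∪ A') B W := by
  obtain ⟨hW, h₁⟩ := h₁
  obtain ⟨_, h₂⟩ := h₂
  simp only [genOf_union] at h₂
  refine ⟨hW, ?_⟩
  rw [genOf_union]
  exact h₁.contraction (genOf_le hX A) (genOf_le hX A') (genOf_le hX B) h₂

lemma groupCI_of_forall_singleton_left (hX : ∀ v, Measurable (X v)) (hA : A.Finite)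
    (h : ∀ a ∈ A, ∀ A' ⊆ A, GroupCI μ X {a} B (W ∪ A')) : GroupCI μ X A B W := by
  refine Set.Finite.induction_on_subset (motive := fun A' _ => GroupCI μ X A' B W) A hA
    (groupCI_empty_left hX B W) fun {a A'} ha hA' _ ih => ?_
  rw [Set.insert_eq, Set.union_comm]
  exact ih.contraction hX (h a ha A' hA')

def PairwiseCI (μ : Measure Ω) [IsFiniteMeasure μ] (X : V → Ω → ℝ) (A B W : Set V) : Prop :=
  ∀ a ∈ A, ∀ b ∈ B, GroupCI μ X {a} {b} W

lemma PairwiseCI.symm (h : PairwiseCI μ X A B W) : PairwiseCI μ X B A W :=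
  fun b hb a ha => (h a ha b hb).symm

lemma groupCI_of_forall_pairwiseCI (hX : ∀ v, Measurable (X v)) (hA : A.Finite) (hB : B.Finite)
    (h : ∀ U ⊆ A ∪ B, PairwiseCI μ X A B (W ∪ U)) : GroupCI μ X A B W := by
  refine (groupCI_of_forall_singleton_left hX hB fun b hb B' hB' => ?_).symm
  refine (groupCI_of_forall_singleton_left hX hA fun a ha A' hA' => ?_).symm
  rw [Set.union_assoc]
  exact h _ (Set.union_subset (hB'.trans Set.subset_union_right)
    (hA'.trans Set.subset_union_left)) a ha b hb

end GroupCI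

section SigmaMarkovFaithful

variable [MeasurableSpace Ω] [StandardBorelSpace Ω] {μ : Measure Ω} [IsFiniteMeasure μ]
  {X : V → Ω → ℝ} {G : MixedGraph V} {A B U W : Set V}

lemma PairwiseCI.union_of_subset_right (hM : SigmaMarkov G μ X) (hF : SigmaFaithful G μ X)
    (h : PairwiseCI μ X A B W) (hU : U ⊆ B) : PairwiseCI μ X A B (W ∪ U) :=
  fun a ha b hb => hM a b _ (sigmaSep_union_of_subset_right hU
    (fun a ha b hb => hF a b W (h a ha b hb)) a ha b hb)

/-- Here σ-separation of singletons coincides with their conditional independence, which is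
symmetric, so the one-sided graphical lemma applies on both sides. -/
lemma PairwiseCI.union (hM : SigmaMarkov G μ X) (hF : SigmaFaithful G μ X)
    (h : PairwiseCI μ X A B W) (hU : U ⊆ A ∪ B) : PairwiseCI μ X A B (W ∪ U) := by
  have hUB := h.union_of_subset_right hM hF (Set.inter_subset_right (s := U) (t := B))
  have hUA := hUB.symm.union_of_subset_right hM hF (Set.inter_subset_right (s := U) (t := A))
  have hsplit : W ∪ U ∩ B ∪ U ∩ A = W ∪ U := by
    rw [Set.union_assoc, ← Set.inter_union_distrib_left, Set.union_comm B,
      Set.inter_eq_left.mpr hU]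
  exact hsplit ▸ hUA.symm

end SigmaMarkovFaithful

open MeasureTheory ProbabilityTheory MixedGraph in
theorem mutualCI_iff_pairwiseCI_general {Ω V I : Type} [MeasurableSpace Ω]
    [StandardBorelSpace Ω] [Fintype V] (μ : Measure Ω) [IsProbabilityMeasure μ]
    (X : V → Ω → ℝ) (hX : ∀ v, Measurable (X v))
    (G : MixedGraph V)
    (hM : SigmaMarkov G μ X) (hF : SigmaFaithful G μ X)
    (q : V → I)
    (Y Z : I) (S : Set I) :
    GroupCI μ X (q ⁻¹' {Y}) (q ⁻¹' {Z}) (q ⁻¹' S) ↔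
      ∀ y z, q y = Y → q z = Z → GroupCI μ X {y} {z} (q ⁻¹' S) := by
  refine ⟨fun h y z hy hz => h.mono (by simpa using hy) (by simpa using hz), fun h => ?_⟩
  have hpair : PairwiseCI μ X (q ⁻¹' {Y}) (q ⁻¹' {Z}) (q ⁻¹' S) :=
    fun y hy z hz => h y z hy hz
  exact groupCI_of_forall_pairwiseCI hX (Set.toFinite _) (Set.toFinite _)
    fun U hU => hpair.union hM hF hU

open MeasureTheory ProbabilityTheory MixedGraph in
/-- Let `G` be a directed mixed graph over micro-variables with a
positive joint density, σ-Markovian and σ-faithful. For a partition `q` and a set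
of groups `S`, two distinct groups `Y, Z ∉ S` are mutually conditionally
independent given the union `T = q ⁻¹' S` of the groups in `S` if and only if they
are pairwise conditionally independent given `T`. -/
theorem mutualCI_iff_pairwiseCI {Ω V I : Type} [MeasurableSpace Ω]
    [StandardBorelSpace Ω] [Fintype V] (μ : Measure Ω) [IsProbabilityMeasure μ]
    (X : V → Ω → ℝ) (hX : ∀ v, Measurable (X v)) (hpos : HasPositiveDensity μ X)
    (G : MixedGraph V) (hDMG : G.IsDMG)
    (hM : SigmaMarkov G μ X) (hF : SigmaFaithful G μ X)
    (q : V → I) (hq : Function.Surjective q)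
    (Y Z : I) (hYZ : Y ≠ Z) (S : Set I) (hY : Y ∉ S) (hZ : Z ∉ S) :
    GroupCI μ X (q ⁻¹' {Y}) (q ⁻¹' {Z}) (q ⁻¹' S) ↔
      ∀ y z, q y = Y → q z = Z → GroupCI μ X {y} {z} (q ⁻¹' S) :=
  mutualCI_iff_pairwiseCI_general μ X hX G hM hF q Y Z S
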